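/- Suppose the closed-loop cost admits the expansion J = J̄ + Σ_t C_t δx_t + R(δx), where δx_t satisfies δx_{t+1} = (A_t + B_t K_t) δx_t + ε B_t w_t + r_t(δx_t) with remainder ‖r_t(δx)‖ ≤ L‖δx‖² and |R(δx)| ≤ L Σ_t ‖δx_t‖², the noise w_t is bounded with ‖w_t‖ ≤ W and zero mean, and δx_0 = 0. Then there exist ε₀ > 0 and a constant C such that for all 0 < ε ≤ ε₀, |E[J] − J̄| ≤ C ε². -/

import Mathlib

open MeasureTheory ProbabilityTheory Matrix Finset

/-!
For `ε ≤ 1` the perturbation `δx` is deterministically `O(ε)`: its norm obeys a scalar quadratic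
recursion with zero initial value. It also differs from `ε y`, where the linear response `y` is
the noise pushed through the linearized dynamics, by `O(ε²)`, since the two recursions differ
only by the quadratic remainder. Hence `J = J̄ + ε Σ_t C_t y_t + O(ε²)` uniformly in `ω`, and the
first-order term has zero mean because each `y_t` is a linear image of zero-mean noise.
-/

noncomputable section

section Majorants

def linearMajorant (a c : ℕ → ℝ) : ℕ → ℝ
  | 0 => 0
  | t + 1 => a t * linearMajorant a c t + c t

def quadraticMajorant (a c : ℕ → ℝ) (L : ℝ) : ℕ → ℝ
  | 0 => 0
  | t + 1 => a t * quadraticMajorant a c L t + c t + L * quadraticMajorant a c L t ^ 2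

variable {a c u : ℕ → ℝ}

theorem le_linearMajorant (ha : ∀ t, 0 ≤ a t) (hu₀ : u 0 ≤ 0)
    (hu : ∀ t, u (t + 1) ≤ a t * u t + c t) (t : ℕ) : u t ≤ linearMajorant a c t := by
  induction t with
  | zero => exact hu₀
  | succ t ih =>
    calc u (t + 1) ≤ a t * u t + c t := hu t
      _ ≤ a t * linearMajorant a c t + c t := by gcongr; exact ha t

theorem linearMajorant_const_mul (s : ℝ) (t : ℕ) :
    linearMajorant a (fun t => s * c t) t = s * linearMajorant a c t := by
  induction t with
  | zero => simp [linearMajorant]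
  | succ t ih => simp only [linearMajorant, ih]; ring

theorem le_mul_quadraticMajorant {L ε : ℝ} (ha : ∀ t, 0 ≤ a t) (hL : 0 ≤ L) (hε₀ : 0 ≤ ε)
    (hε₁ : ε ≤ 1) (hu_nonneg : ∀ t, 0 ≤ u t) (hu₀ : u 0 ≤ 0)
    (hu : ∀ t, u (t + 1) ≤ a t * u t + ε * c t + L * u t ^ 2) (t : ℕ) :
    u t ≤ ε * quadraticMajorant a c L t := by
  induction t with
  | zero => simpa [quadraticMajorant] using hu₀
  | succ t ih =>
    set D := quadraticMajorant a c L t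
    -- `ε² ≤ ε` is what keeps the quadratic term first order
    have hsq : u t ^ 2 ≤ ε * D ^ 2 :=
      calc u t ^ 2 ≤ (ε * D) ^ 2 := pow_le_pow_left₀ (hu_nonneg t) ih 2
        _ = ε ^ 2 * D ^ 2 := by ring
        _ ≤ ε * D ^ 2 := by gcongr; nlinarith
    calc u (t + 1) ≤ a t * u t + ε * c t + L * u t ^ 2 := hu t
      _ ≤ a t * (ε * D) + ε * c t + L * (ε * D ^ 2) := by gcongr; exact ha t
      _ = ε * quadraticMajorant a c L (t + 1) := by rw [quadraticMajorant]; ring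

end Majorants

section Perturbation

variable {E : Type*} [NormedAddCommGroup E] [NormedSpace ℝ E]

def linearResponse (F : ℕ → E →L[ℝ] E) (g : ℕ → E) : ℕ → E
  | 0 => 0
  | t + 1 => F t (linearResponse F g t) + g t

variable {F : ℕ → E →L[ℝ] E} {g x : ℕ → E} {r : ℕ → E → E} {G : ℕ → ℝ} {L ε : ℝ}

theorem norm_le_mul_quadraticMajorant (hL : 0 ≤ L) (hε₀ : 0 ≤ ε) (hε₁ : ε ≤ 1)
    (hg : ∀ t, ‖g t‖ ≤ G t) (hr : ∀ t z, ‖r t z‖ ≤ L * ‖z‖ ^ 2) (hx₀ : x 0 = 0)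
    (hx : ∀ t, x (t + 1) = F t (x t) + ε • g t + r t (x t)) (t : ℕ) :
    ‖x t‖ ≤ ε * quadraticMajorant (‖F ·‖) G L t := by
  refine le_mul_quadraticMajorant (fun _ => norm_nonneg _) hL hε₀ hε₁ (fun _ => norm_nonneg _)
    (by simp [hx₀]) (fun t => ?_) t
  calc ‖x (t + 1)‖ ≤ ‖F t (x t)‖ + ‖ε • g t‖ + ‖r t (x t)‖ := hx t ▸ norm_add₃_le
    _ ≤ ‖F t‖ * ‖x t‖ + ε * G t + L * ‖x t‖ ^ 2 := by
      rw [norm_smul, Real.norm_of_nonneg hε₀]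
      gcongr
      exacts [(F t).le_opNorm _, hg t, hr t _]

theorem norm_sub_smul_linearResponse_le (hL : 0 ≤ L) (hε₀ : 0 ≤ ε) (hε₁ : ε ≤ 1)
    (hg : ∀ t, ‖g t‖ ≤ G t) (hr : ∀ t z, ‖r t z‖ ≤ L * ‖z‖ ^ 2) (hx₀ : x 0 = 0)
    (hx : ∀ t, x (t + 1) = F t (x t) + ε • g t + r t (x t)) (t : ℕ) :
    ‖x t - ε • linearResponse F g t‖ ≤
      ε ^ 2 * linearMajorant (‖F ·‖) (fun t => L * quadraticMajorant (‖F ·‖) G L t ^ 2) t := by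
  rw [← linearMajorant_const_mul]
  refine le_linearMajorant (u := fun t => ‖x t - ε • linearResponse F g t‖)
    (fun _ => norm_nonneg _) (by simp [hx₀, linearResponse]) (fun t => ?_) t
  have hstep : x (t + 1) - ε • linearResponse F g (t + 1)
      = F t (x t - ε • linearResponse F g t) + r t (x t) := by
    rw [hx, linearResponse, map_sub, map_smul, smul_add]
    abel
  have hxt := norm_le_mul_quadraticMajorant hL hε₀ hε₁ hg hr hx₀ hx t
  rw [hstep]
  calc ‖F t (x t - ε • linearResponse F g t) + r t (x t)‖
      ≤ ‖F t (x t - ε • linearResponse F g t)‖ + ‖r t (x t)‖ := norm_add_le _ _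
    _ ≤ ‖F t‖ * ‖x t - ε • linearResponse F g t‖
          + L * (ε * quadraticMajorant (‖F ·‖) G L t) ^ 2 := by
      gcongr
      exacts [(F t).le_opNorm _, (hr t _).trans (by gcongr)]
    _ = _ := by ring

theorem abs_cost_sub_firstOrder_le {ℓ : ℕ → E →L[ℝ] ℝ} {R : (ℕ → E) → ℝ} {y : ℕ → E}
    {D Δ : ℕ → ℝ} {S : Finset ℕ} (hL : 0 ≤ L) (hR : |R x| ≤ L * ∑ t ∈ S, ‖x t‖ ^ 2)
    (hx : ∀ t, ‖x t‖ ≤ ε * D t) (hxy : ∀ t, ‖x t - ε • y t‖ ≤ ε ^ 2 * Δ t) :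
    |(∑ t ∈ S, ℓ t (x t)) + R x - ε * ∑ t ∈ S, ℓ t (y t)|
      ≤ (∑ t ∈ S, ‖ℓ t‖ * Δ t + L * ∑ t ∈ S, D t ^ 2) * ε ^ 2 := by
  have hsplit : (∑ t ∈ S, ℓ t (x t)) + R x - ε * ∑ t ∈ S, ℓ t (y t)
      = (∑ t ∈ S, ℓ t (x t - ε • y t)) + R x := by
    simp only [map_sub, map_smul, smul_eq_mul, sum_sub_distrib, mul_sum]
    ring
  rw [hsplit]
  calc |(∑ t ∈ S, ℓ t (x t - ε • y t)) + R x|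
      ≤ (∑ t ∈ S, |ℓ t (x t - ε • y t)|) + |R x| :=
        (abs_add_le _ _).trans (by gcongr; exact abs_sum_le_sum_abs _ _)
    _ ≤ (∑ t ∈ S, ‖ℓ t‖ * (ε ^ 2 * Δ t)) + L * ∑ t ∈ S, (ε * D t) ^ 2 := by
      gcongr with t ht t ht
      · exact ((ℓ t).le_opNorm _).trans (by gcongr; exact hxy t)
      · exact hR.trans (by gcongr with t; exact hx t)
    _ = _ := by
      simp only [mul_sum, sum_mul, add_mul]
      congr 1 <;> exact sum_congr rfl fun _ _ => by ring

end Perturbation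

section LinearResponse

variable {Ω E : Type*} [MeasurableSpace Ω] {μ : Measure Ω}
  [NormedAddCommGroup E] [NormedSpace ℝ E] {F : ℕ → E →L[ℝ] E} {g : ℕ → Ω → E}

theorem integrable_linearResponse (hg : ∀ t, Integrable (g t) μ) (t : ℕ) :
    Integrable (fun ω => linearResponse F (g · ω) t) μ := by
  induction t with
  | zero => exact integrable_zero _ _ _
  | succ t ih => exact ((F t).integrable_comp ih).add (hg t)

theorem integral_linearResponse [CompleteSpace E] (hg : ∀ t, Integrable (g t) μ)
    (hg₀ : ∀ t, ∫ ω, g t ω ∂μ = 0) (t : ℕ) :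
    ∫ ω, linearResponse F (g · ω) t ∂μ = 0 := by
  induction t with
  | zero => simp [linearResponse]
  | succ t ih =>
    simp only [linearResponse]
    rw [integral_add ((F t).integrable_comp (integrable_linearResponse hg t)) (hg t),
      (F t).integral_comp_comm (integrable_linearResponse hg t), ih, hg₀, map_zero, add_zero]

end LinearResponse

theorem abs_integral_le_of_abs_sub_le {Ω : Type*} [MeasurableSpace Ω] {μ : Measure Ω}
    [IsProbabilityMeasure μ] {f h : Ω → ℝ} {c : ℝ} (hf : Integrable f μ) (hh : Integrable h μ)
    (hh₀ : ∫ ω, h ω ∂μ = 0) (hfh : ∀ ω, |f ω - h ω| ≤ c) : |∫ ω, f ω ∂μ| ≤ c := by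
  have hsub : ∫ ω, f ω ∂μ = ∫ ω, f ω - h ω ∂μ := by rw [integral_sub hf hh, hh₀, sub_zero]
  simpa [hsub] using norm_integral_le_of_norm_le_const (μ := μ) (f := fun ω => f ω - h ω)
    (ae_of_all _ hfh)

theorem abs_integral_cost_sub_nominal_le {Ω E : Type*} [MeasurableSpace Ω] {μ : Measure Ω}
    [IsProbabilityMeasure μ] [NormedAddCommGroup E] [NormedSpace ℝ E] [CompleteSpace E]
    {F : ℕ → E →L[ℝ] E} {g : ℕ → Ω → E} {G : ℕ → ℝ} {r : ℕ → E → E} {L ε : ℝ}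
    {ℓ : ℕ → E →L[ℝ] ℝ} {R : (ℕ → E) → ℝ} {S : Finset ℕ} {x : ℕ → Ω → E} {J : Ω → ℝ} {J₀ : ℝ}
    (hL : 0 ≤ L) (hε₀ : 0 ≤ ε) (hε₁ : ε ≤ 1) (hg_int : ∀ t, Integrable (g t) μ)
    (hg_mean : ∀ t, ∫ ω, g t ω ∂μ = 0) (hg_bdd : ∀ t ω, ‖g t ω‖ ≤ G t)
    (hr : ∀ t z, ‖r t z‖ ≤ L * ‖z‖ ^ 2) (hR : ∀ z, |R z| ≤ L * ∑ t ∈ S, ‖z t‖ ^ 2)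
    (hx₀ : ∀ ω, x 0 ω = 0) (hx : ∀ t ω, x (t + 1) ω = F t (x t ω) + ε • g t ω + r t (x t ω))
    (hJ : ∀ ω, J ω = J₀ + (∑ t ∈ S, ℓ t (x t ω)) + R (x · ω)) (hJ_int : Integrable J μ) :
    |(∫ ω, J ω ∂μ) - J₀| ≤ (∑ t ∈ S, ‖ℓ t‖ *
        linearMajorant (‖F ·‖) (fun t => L * quadraticMajorant (‖F ·‖) G L t ^ 2) t
      + L * ∑ t ∈ S, quadraticMajorant (‖F ·‖) G L t ^ 2) * ε ^ 2 := by
  have hy_int t : Integrable (fun ω => ℓ t (linearResponse F (g · ω) t)) μ :=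
    (ℓ t).integrable_comp (integrable_linearResponse hg_int t)
  have hfirst_int : Integrable (fun ω => ε * ∑ t ∈ S, ℓ t (linearResponse F (g · ω) t)) μ :=
    (integrable_finsetSum _ fun t _ => hy_int t).const_mul ε
  have hfirst_mean : ∫ ω, ε * ∑ t ∈ S, ℓ t (linearResponse F (g · ω) t) ∂μ = 0 := by
    simp [integral_const_mul, integral_finsetSum _ fun t _ => hy_int t,
      (ℓ _).integral_comp_comm (integrable_linearResponse hg_int _),
      integral_linearResponse hg_int hg_mean]
  have hremainder ω := abs_cost_sub_firstOrder_le (ℓ := ℓ) (S := S) hL (hR _)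
    (norm_le_mul_quadraticMajorant (F := F) (x := (x · ω)) hL hε₀ hε₁ (hg_bdd · ω) hr (hx₀ ω)
      (hx · ω))
    (norm_sub_smul_linearResponse_le (F := F) (x := (x · ω)) hL hε₀ hε₁ (hg_bdd · ω) hr (hx₀ ω)
      (hx · ω))
  have hcentered := abs_integral_le_of_abs_sub_le (hJ_int.sub (integrable_const J₀))
    hfirst_int hfirst_mean fun ω => by
      rw [Pi.sub_apply, hJ, add_assoc, add_sub_cancel_left]
      exact hremainder ω
  simpa [integral_sub hJ_int (integrable_const J₀)] using hcentered

theorem expected_cost_near_nominal_general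
    {Ω : Type*} [MeasureSpace Ω] [IsProbabilityMeasure (ℙ : Measure Ω)]
    (n M T : ℕ)
    (A : ℕ → Matrix (Fin n) (Fin n) ℝ) (B : ℕ → Matrix (Fin n) (Fin M) ℝ)
    (K : ℕ → Matrix (Fin M) (Fin n) ℝ)
    (Cv : ℕ → (Fin n → ℝ)) (Jbar : ℝ) (L W : ℝ) (hL : 0 < L)
    -- bounded, zero-mean, independent noise
    (w : ℕ → Ω → (Fin M → ℝ))
    (hw_meas : ∀ t, Measurable (w t))
    (hw_bdd : ∀ t ω, ‖w t ω‖ ≤ W)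
    (hw_mean : ∀ t i, (∫ ω, w t ω i) = 0)
    -- second-order remainders of the closed-loop dynamics
    (r : ℕ → (Fin n → ℝ) → (Fin n → ℝ))
    (hr : ∀ t z, ‖r t z‖ ≤ L * ‖z‖ ^ 2)
    -- second-order remainder of the cost
    (R : (ℕ → (Fin n → ℝ)) → ℝ)
    (hR : ∀ z : ℕ → (Fin n → ℝ), |R z| ≤ L * ∑ t ∈ Finset.range (T + 1), ‖z t‖ ^ 2)
    -- for each `ε`, the closed-loop perturbation process
    (x : ℝ → ℕ → Ω → (Fin n → ℝ))
    (hx0 : ∀ ε ω, x ε 0 ω = 0)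
    (hx : ∀ ε t ω, x ε (t + 1) ω =
      (A t + B t * K t).mulVec (x ε t ω) + ε • (B t).mulVec (w t ω)
        + r t (x ε t ω))
    -- the closed-loop cost
    (J : ℝ → Ω → ℝ)
    (hJ : ∀ ε ω, J ε ω =
      Jbar + (∑ t ∈ Finset.range (T + 1), Cv t ⬝ᵥ x ε t ω)
        + R (fun t => x ε t ω))
    (hJ_int : ∀ ε, Integrable (J ε)) :
    ∃ ε₀ > 0, ∃ C : ℝ, ∀ ε : ℝ, 0 < ε → ε ≤ ε₀ →
      |(∫ ω, J ε ω) - Jbar| ≤ C * ε ^ 2 := by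
  let F t := LinearMap.toContinuousLinearMap (A t + B t * K t).mulVecLin
  let Bc t := LinearMap.toContinuousLinearMap (B t).mulVecLin
  let ℓ t := LinearMap.toContinuousLinearMap (dotProductBilin ℝ ℝ (Cv t))
  have hℓ t v : ℓ t v = Cv t ⬝ᵥ v := rfl
  have hw_int t : Integrable (w t) :=
    .of_bound (hw_meas t).aestronglyMeasurable W (ae_of_all _ (hw_bdd t))
  have hw_integral t : ∫ ω, w t ω = 0 :=
    funext fun i => (eval_integral (fun i => (hw_int t).eval i) i).trans (hw_mean t i)
  exact ⟨1, one_pos, _, fun ε hε hε₁ =>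
    abs_integral_cost_sub_nominal_le (F := F) (g := fun t ω => Bc t (w t ω)) (ℓ := ℓ)
      (J₀ := Jbar) hL.le hε.le hε₁ (fun t => (Bc t).integrable_comp (hw_int t))
      (fun t => by rw [(Bc t).integral_comp_comm (hw_int t), hw_integral, map_zero])
      (fun t ω => (Bc t).le_opNorm_of_le (hw_bdd t ω)) hr hR (hx0 ε) (hx ε)
      (fun ω => by simp only [hJ, hℓ]) (hJ_int ε)⟩

/-- if the closed-loop cost expands as
`J = J̄ + Σ_t C_t δx_t + R(δx)` with quadratically bounded remainders in both
the dynamics and the cost, bounded zero-mean noise, and `δx_0 = 0`, then there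
are `ε₀ > 0` and `C` such that `|E[J] − J̄| ≤ C ε²` for all `0 < ε ≤ ε₀`. -/
theorem expected_cost_near_nominal
    {Ω : Type*} [MeasureSpace Ω] [IsProbabilityMeasure (ℙ : Measure Ω)]
    (n M T : ℕ)
    (A : ℕ → Matrix (Fin n) (Fin n) ℝ) (B : ℕ → Matrix (Fin n) (Fin M) ℝ)
    (K : ℕ → Matrix (Fin M) (Fin n) ℝ)
    (Cv : ℕ → (Fin n → ℝ)) (Jbar : ℝ) (L W : ℝ) (hL : 0 < L)
    -- bounded, zero-mean, independent noise
    (w : ℕ → Ω → (Fin M → ℝ))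
    (hw_meas : ∀ t, Measurable (w t))
    (hw_indep : iIndepFun w ℙ)
    (hw_bdd : ∀ t ω, ‖w t ω‖ ≤ W)
    (hw_mean : ∀ t i, (∫ ω, w t ω i) = 0)
    -- second-order remainders of the closed-loop dynamics
    (r : ℕ → (Fin n → ℝ) → (Fin n → ℝ))
    (hr : ∀ t z, ‖r t z‖ ≤ L * ‖z‖ ^ 2)
    -- second-order remainder of the cost
    (R : (ℕ → (Fin n → ℝ)) → ℝ)
    (hR : ∀ z : ℕ → (Fin n → ℝ), |R z| ≤ L * ∑ t ∈ Finset.range (T + 1), ‖z t‖ ^ 2)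
    -- for each `ε`, the closed-loop perturbation process
    (x : ℝ → ℕ → Ω → (Fin n → ℝ))
    (hx0 : ∀ ε ω, x ε 0 ω = 0)
    (hx : ∀ ε t ω, x ε (t + 1) ω =
      (A t + B t * K t).mulVec (x ε t ω) + ε • (B t).mulVec (w t ω)
        + r t (x ε t ω))
    -- the closed-loop cost
    (J : ℝ → Ω → ℝ)
    (hJ : ∀ ε ω, J ε ω =
      Jbar + (∑ t ∈ Finset.range (T + 1), Cv t ⬝ᵥ x ε t ω)
        + R (fun t => x ε t ω))
    (hJ_int : ∀ ε, Integrable (J ε)) :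
    ∃ ε₀ > 0, ∃ C : ℝ, ∀ ε : ℝ, 0 < ε → ε ≤ ε₀ →
      |(∫ ω, J ε ω) - Jbar| ≤ C * ε ^ 2 :=
  expected_cost_near_nominal_general n M T A B K Cv Jbar L W hL w hw_meas hw_bdd hw_mean r hr R hR x
    hx0 hx J hJ hJ_int
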